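/- arXiv:2008.13276 — 6 statements merged into one kernel-verified Lean document; each statement's English description precedes it below -/
import Mathlib

section
/- Every outcome produced by an execution of Rule X satisfies extended justified representation up to one project: for every (α,T)-cohesive group of voters S there exists a voter i ∈ S such that u_i(W) ≥ Σ_{c∈T} α(c), or there exist i ∈ S and a candidate a ∈ C with u_i(W ∪ {a}) > Σ_{c∈T} α(c). -/
open Finset

section PBDefs

variable {V C : Type*} [Fintype V] [DecidableEq V] [Fintype C] [DecidableEq C]

/-- Total cost (as a real number) of a set of candidates. -/
def costOf (cost : C → ℚ) (T : Finset C) : ℝ := ∑ c ∈ T, (cost c : ℝ)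

/-- Total (additive) utility of voter `i` for a set of candidates. -/
def util (u : V → C → ℝ) (i : V) (T : Finset C) : ℝ := ∑ c ∈ T, u i c

/-- A set of candidates is feasible if its total cost is within the budget of 1. -/
def feasible (cost : C → ℚ) (W : Finset C) : Prop := costOf cost W ≤ 1

/-- The validity conditions of a PB election: positive costs, utilities in `[0,1]`,
and every candidate is assigned positive utility by some voter. -/
def validPB (cost : C → ℚ) (u : V → C → ℝ) : Prop :=
  (∀ c, 0 < cost c) ∧ (∀ i c, 0 ≤ u i c ∧ u i c ≤ 1) ∧ (∀ c, ∃ i, 0 < u i c)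

/-- Extended justified representation, up to one project: for every (α,T)-cohesive
(nonempty) group `S` of voters, some voter `i ∈ S` gets utility at least `∑ c ∈ T, α c`,
or some voter `i ∈ S` would exceed this utility after adding one more candidate. -/
def EJRupToOne (cost : C → ℚ) (u : V → C → ℝ) (W : Finset C) : Prop :=
  ∀ (α : C → ℝ) (S : Finset V) (T : Finset C),
    (∀ c, 0 ≤ α c ∧ α c ≤ 1) →
    S.Nonempty →
    costOf cost T * (Fintype.card V : ℝ) ≤ (S.card : ℝ) →
    (∀ i ∈ S, ∀ c ∈ T, α c ≤ u i c) →
    (∃ i ∈ S, (∑ c ∈ T, α c) ≤ util u i W) ∨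
      (∃ i ∈ S, ∃ a : C, (∑ c ∈ T, α c) < util u i (insert a W))

/-- Extended justified representation (exact version): for every (α,T)-cohesive
(nonempty) group `S` of voters, some voter `i ∈ S` gets utility at least `∑ c ∈ T, α c`. -/
def EJRexact (cost : C → ℚ) (u : V → C → ℝ) (W : Finset C) : Prop :=
  ∀ (α : C → ℝ) (S : Finset V) (T : Finset C),
    (∀ c, 0 ≤ α c ∧ α c ≤ 1) →
    S.Nonempty →
    costOf cost T * (Fintype.card V : ℝ) ≤ (S.card : ℝ) →
    (∀ i ∈ S, ∀ c ∈ T, α c ≤ u i c) →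
    ∃ i ∈ S, (∑ c ∈ T, α c) ≤ util u i W

/-- A (nonempty) group `S` of voters is weakly (β,T)-cohesive. -/
def weaklyCohesive (cost : C → ℚ) (u : V → C → ℝ) (β : ℝ) (S : Finset V) (T : Finset C) :
    Prop :=
  S.Nonempty ∧ costOf cost T * (Fintype.card V : ℝ) ≤ (S.card : ℝ) ∧
    ∀ i ∈ S, β ≤ util u i T

/-- Full justified representation. -/
def FJR (cost : C → ℚ) (u : V → C → ℝ) (W : Finset C) : Prop :=
  ∀ (β : ℝ) (S : Finset V) (T : Finset C),
    weaklyCohesive cost u β S T → ∃ i ∈ S, β ≤ util u i W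

/-- An outcome is exhaustive if no further candidate fits within the budget. -/
def exhaustive (cost : C → ℚ) (W : Finset C) : Prop :=
  ∀ c ∉ W, 1 < costOf cost (insert c W)

/-- The core: no nonempty group `S` of voters together with a set `T` of candidates
affordable with `S`'s share of the budget can block the outcome. -/
def inCore (cost : C → ℚ) (u : V → C → ℝ) (W : Finset C) : Prop :=
  ∀ (S : Finset V) (T : Finset C), S.Nonempty →
    costOf cost T * (Fintype.card V : ℝ) ≤ (S.card : ℝ) →
    ∃ i ∈ S, util u i T ≤ util u i W

/-- The multiplicative `a`-approximate core. -/
def inAlphaCore (cost : C → ℚ) (u : V → C → ℝ) (a : ℝ) (W : Finset C) : Prop :=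
  ∀ (S : Finset V) (T : Finset C), T.Nonempty →
    costOf cost T ≤ (S.card : ℝ) / (Fintype.card V : ℝ) →
    ∃ i ∈ S, ∃ c ∈ T, util u i T / a ≤ util u i (insert c W)

/-- The total amount paid so far by voter `i`, given per-candidate payments. -/
def totalPaid (pay : V → C → ℝ) (i : V) : ℝ := ∑ c, pay i c

/-- A candidate `c` is ρ-affordable given the payments made so far. -/
def affordable (cost : C → ℚ) (u : V → C → ℝ) (pay : V → C → ℝ) (ρ : ℝ) (c : C) : Prop :=
  ∑ i, min (1 / (Fintype.card V : ℝ) - totalPaid pay i) (u i c * ρ) = (cost c : ℝ)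

/-- One step of Rule X: add a candidate that is ρ-affordable for the minimum ρ ≥ 0,
and record the corresponding payments. -/
def RuleXStep (cost : C → ℚ) (u : V → C → ℝ) :
    (Finset C × (V → C → ℝ)) → (Finset C × (V → C → ℝ)) → Prop := fun s t =>
  ∃ c ∉ s.1, ∃ ρ : ℝ, 0 ≤ ρ ∧ affordable cost u s.2 ρ c ∧
    (∀ ρ' : ℝ, 0 ≤ ρ' → ∀ c' ∉ s.1, affordable cost u s.2 ρ' c' → ρ ≤ ρ') ∧
    t = (insert c s.1,
      fun i c' => if c' = c then
        min (1 / (Fintype.card V : ℝ) - totalPaid s.2 i) (u i c * ρ) else s.2 i c')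

/-- Rule X terminates when no remaining candidate is ρ-affordable for any ρ ≥ 0. -/
def RuleXTerminal (cost : C → ℚ) (u : V → C → ℝ) (s : Finset C × (V → C → ℝ)) : Prop :=
  ∀ ρ : ℝ, 0 ≤ ρ → ∀ c ∉ s.1, ¬ affordable cost u s.2 ρ c

/-- `W` is the output of some execution of Rule X. -/
def RuleXOutcome (cost : C → ℚ) (u : V → C → ℝ) (W : Finset C) : Prop :=
  ∃ pay : V → C → ℝ,
    Relation.ReflTransGen (RuleXStep cost u) (∅, fun _ _ => 0) (W, pay) ∧
      RuleXTerminal cost u (W, pay)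

/-- One step of the Greedy Cohesive Rule: a state consists of the current outcome,
the active voters and the active candidates.  The rule picks a weakly (β,T)-cohesive
group of active voters with β maximal, breaking ties in favor of smaller `cost T`. -/
def GCRStep (cost : C → ℚ) (u : V → C → ℝ) :
    (Finset C × Finset V × Finset C) → (Finset C × Finset V × Finset C) → Prop := fun s t =>
  ∃ (β : ℝ) (S : Finset V) (T : Finset C),
    0 < β ∧ S ⊆ s.2.1 ∧ T ⊆ s.2.2 ∧ weaklyCohesive cost u β S T ∧
    (∀ (β' : ℝ) (S' : Finset V) (T' : Finset C), 0 < β' → S' ⊆ s.2.1 → T' ⊆ s.2.2 →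
      weaklyCohesive cost u β' S' T' → β' ≤ β) ∧
    (∀ (S' : Finset V) (T' : Finset C), S' ⊆ s.2.1 → T' ⊆ s.2.2 →
      weaklyCohesive cost u β S' T' → costOf cost T ≤ costOf cost T') ∧
    t = (s.1 ∪ T, s.2.1 \ S, s.2.2 \ T)

/-- GCR terminates when no weakly cohesive group of active voters remains. -/
def GCRTerminal (cost : C → ℚ) (u : V → C → ℝ) (s : Finset C × Finset V × Finset C) : Prop :=
  ∀ (β : ℝ) (S : Finset V) (T : Finset C), 0 < β → S ⊆ s.2.1 → T ⊆ s.2.2 →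
    ¬ weaklyCohesive cost u β S T

/-- `W` is the output of some execution of the Greedy Cohesive Rule. -/
def GCROutcome (cost : C → ℚ) (u : V → C → ℝ) (W : Finset C) : Prop :=
  ∃ (AV : Finset V) (AC : Finset C),
    Relation.ReflTransGen (GCRStep cost u) (∅, Finset.univ, Finset.univ) (W, AV, AC) ∧
      GCRTerminal cost u (W, AV, AC)

/-- A price system `(b, p)` (with nonnegative payments) supports the outcome `W`:
conditions (C1)-(C5). -/
def supports (cost : C → ℚ) (u : V → C → ℝ) (b : ℝ) (p : V → C → ℝ) (W : Finset C) : Prop :=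
  1 ≤ b ∧ (∀ i c, 0 ≤ p i c) ∧
  (∀ i c, u i c = 0 → p i c = 0) ∧
  (∀ i, ∑ c, p i c ≤ b / (Fintype.card V : ℝ)) ∧
  (∀ c ∈ W, ∑ i, p i c = (cost c : ℝ)) ∧
  (∀ c ∉ W, ∑ i, p i c = 0) ∧
  (∀ c ∉ W, ∑ i ∈ Finset.univ.filter (fun i => 0 < u i c),
    (b / (Fintype.card V : ℝ) - ∑ c' ∈ W, p i c') ≤ (cost c : ℝ))

/-- An outcome is priceable if some price system supports it. -/
def priceable (cost : C → ℚ) (u : V → C → ℝ) (W : Finset C) : Prop :=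
  ∃ (b : ℝ) (p : V → C → ℝ), supports cost u b p W

/-- EJR for approval-based elections: every `T`-cohesive group contains a voter
with at least `|T|` approved candidates in `W`. -/
def approvalEJR (cost : C → ℚ) (A : V → Finset C) (W : Finset C) : Prop :=
  ∀ (S : Finset V) (T : Finset C), S.Nonempty →
    costOf cost T * (Fintype.card V : ℝ) ≤ (S.card : ℝ) →
    (∀ i ∈ S, T ⊆ A i) →
    ∃ i ∈ S, T.card ≤ (A i ∩ W).card

/-- The `t`-th harmonic number. -/
noncomputable def harm (t : ℕ) : ℝ := ∑ j ∈ Finset.range t, (1 : ℝ) / (j + 1)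

/-- The PAV score of an outcome. -/
noncomputable def PAVscore (A : V → Finset C) (W : Finset C) : ℝ := ∑ i, harm ((A i ∩ W).card)

end PBDefs

/-! Suppose the cohesive group `S` violates the property for the outcome `W`, and let `ρ` be the
least rate `cost c / (|S| α c)` at which `S` alone could buy an unelected candidate `c ∈ T`.
By induction along the execution, every purchase so far was made at rate at most `ρ`, and a
candidate `c ∈ T` at rate at most `cost c / (|S| α c)`. Hence each `j ∈ S` has paid at most
`ρ (u_j(X) - α(X ∩ T)) + cost(X ∩ T) / |S|`; since adding any single candidate to `W` leaves
`j` at utility at most `α(T)`, this is at most `1 / n - cost c / |S|` for every `c ∈ T` not yet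
bought. So `S` can still afford any such `c` at rate `cost c / (|S| α c)`, which keeps the
rate bounds going, and at termination the candidate attaining `ρ` is still affordable: a
contradiction. -/

theorem Finset.sum_sub_sum_inter_le_of_subset {ι M : Type*} [DecidableEq ι] [AddCommGroup M]
    [PartialOrder M] [IsOrderedAddMonoid M] {f g : ι → M} {s t T : Finset ι} (hst : s ⊆ t)
    (hf : ∀ i ∈ t, 0 ≤ f i) (hgf : ∀ i ∈ T, g i ≤ f i) :
    ∑ i ∈ s, f i - ∑ i ∈ s ∩ T, g i ≤ ∑ i ∈ t, f i - ∑ i ∈ t ∩ T, g i := by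
  simp only [← Finset.sum_ite_mem, ← Finset.sum_sub_distrib]
  refine Finset.sum_le_sum_of_subset_of_nonneg hst fun i hi _ => ?_
  split_ifs with hiT
  · exact sub_nonneg.2 (hgf i hiT)
  · simpa using hf i hi

section RuleX

variable {V C : Type*} [Fintype V] [Fintype C] {cost : C → ℚ} {u : V → C → ℝ}

theorem exists_affordable_le {p : V → C → ℝ} {c : C} {ρmax : ℝ} (hcost : 0 ≤ cost c)
    (hp : ∀ i, totalPaid p i ≤ 1 / (Fintype.card V : ℝ)) (hρmax : 0 ≤ ρmax)
    (h : (cost c : ℝ) ≤ ∑ i, min (1 / (Fintype.card V : ℝ) - totalPaid p i) (u i c * ρmax)) :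
    ∃ ρ ∈ Set.Icc 0 ρmax, affordable cost u p ρ c := by
  have hcont : Continuous fun ρ : ℝ =>
      ∑ i, min (1 / (Fintype.card V : ℝ) - totalPaid p i) (u i c * ρ) := by
    fun_prop
  have hzero : ∑ i, min (1 / (Fintype.card V : ℝ) - totalPaid p i) (u i c * 0) = 0 :=
    Finset.sum_eq_zero fun i _ => by rw [mul_zero, min_eq_right (sub_nonneg.2 (hp i))]
  refine intermediate_value_Icc hρmax hcont.continuousOn ⟨?_, h⟩
  rw [hzero]
  exact_mod_cast hcost

theorem exists_affordable_of_group {p : V → C → ℝ} {c : C} {S : Finset V} {β : ℝ}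
    (hcost : 0 ≤ cost c) (hu : ∀ i, 0 ≤ u i c)
    (hp : ∀ i, totalPaid p i ≤ 1 / (Fintype.card V : ℝ)) (hS : S.Nonempty) (hβ : 0 < β)
    (hβu : ∀ j ∈ S, β ≤ u j c)
    (hbudget : ∀ j ∈ S, cost c / S.card ≤ 1 / (Fintype.card V : ℝ) - totalPaid p j) :
    ∃ ρ, 0 ≤ ρ ∧ β * ρ ≤ cost c / S.card ∧ affordable cost u p ρ c := by
  have hs : (0 : ℝ) < S.card := by exact_mod_cast hS.card_pos
  have hcost' : (0 : ℝ) ≤ cost c := by exact_mod_cast hcost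
  set ρmax : ℝ := cost c / S.card / β with hρmax_def
  have hρmax0 : 0 ≤ ρmax := by positivity
  have hρmax : β * ρmax = cost c / S.card := by rw [hρmax_def]; field_simp
  obtain ⟨ρ, ⟨hρ0, hρle⟩, haff⟩ := exists_affordable_le hcost hp hρmax0 <| calc
    (cost c : ℝ) = ∑ _j ∈ S, (cost c : ℝ) / S.card := by
        rw [Finset.sum_const, nsmul_eq_mul]; field_simp
    _ ≤ ∑ j ∈ S, min (1 / (Fintype.card V : ℝ) - totalPaid p j) (u j c * ρmax) :=
        Finset.sum_le_sum fun j hj => le_min (hbudget j hj)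
          (by rw [← hρmax]; exact mul_le_mul_of_nonneg_right (hβu j hj) hρmax0)
    _ ≤ ∑ i, min (1 / (Fintype.card V : ℝ) - totalPaid p i) (u i c * ρmax) :=
        Finset.sum_le_sum_of_subset_of_nonneg (Finset.subset_univ S) fun i _ _ =>
          le_min (sub_nonneg.2 (hp i)) (mul_nonneg (hu i) hρmax0)
  exact ⟨ρ, hρ0, hρmax ▸ mul_le_mul_of_nonneg_left hρle hβ.le, haff⟩

theorem mul_le_div_card_of_le_affordable {X : Finset C} {p : V → C → ℝ} {ρt β : ℝ} {c : C}
    {S : Finset V} (hmin : ∀ ρ, 0 ≤ ρ → ∀ c' ∉ X, affordable cost u p ρ c' → ρt ≤ ρ)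
    (hρt : 0 ≤ ρt) (hcost : 0 ≤ cost c) (hu : ∀ i, 0 ≤ u i c)
    (hp : ∀ i, totalPaid p i ≤ 1 / (Fintype.card V : ℝ)) (hc : c ∉ X) (hS : S.Nonempty)
    (hβu : ∀ j ∈ S, β ≤ u j c)
    (hbudget : ∀ j ∈ S, cost c / S.card ≤ 1 / (Fintype.card V : ℝ) - totalPaid p j) :
    β * ρt ≤ cost c / S.card := by
  rcases le_or_gt β 0 with hβ | hβ
  · exact (mul_nonpos_of_nonpos_of_nonneg hβ hρt).trans (by positivity)
  · obtain ⟨ρ, hρ0, hβρ, haff⟩ := exists_affordable_of_group hcost hu hp hS hβ hβu hbudget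
    exact (mul_le_mul_of_nonneg_left (hmin ρ hρ0 c hc haff) hβ.le).trans hβρ

def ValidPayments (X : Finset C) (p : V → C → ℝ) : Prop :=
  (∀ i, totalPaid p i ≤ 1 / (Fintype.card V : ℝ)) ∧ ∀ i, ∀ c ∉ X, p i c = 0

variable [DecidableEq C]

theorem ValidPayments.step {X X' : Finset C} {p p' : V → C → ℝ} (h : ValidPayments X p)
    (hstep : RuleXStep cost u (X, p) (X', p')) : ValidPayments X' p' := by
  obtain ⟨ct, hct, ρ, -, -, -, hst⟩ := hstep
  simp only [Prod.mk.injEq] at hst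
  obtain ⟨rfl, rfl⟩ := hst
  refine ⟨fun i => ?_, fun i c hc => ?_⟩
  · set m := min (1 / (Fintype.card V : ℝ) - totalPaid p i) (u i ct * ρ)
    have hsplit : ∀ c, (if c = ct then m else p i c) = p i c + if c = ct then m else 0 := by
      intro c
      split_ifs with hc
      · rw [hc, h.2 i ct hct, zero_add]
      · rw [add_zero]
    change ∑ c, (if c = ct then m else p i c) ≤ _
    rw [Finset.sum_congr rfl fun c _ => hsplit c, Finset.sum_add_distrib, Finset.sum_ite_eq']
    simp only [Finset.mem_univ, if_true]
    exact le_sub_iff_add_le'.mp (min_le_left _ _)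
  · rw [Finset.mem_insert, not_or] at hc
    simp only [if_neg hc.1]
    exact h.2 i c hc.2

theorem validPayments_of_reachable {st : Finset C × (V → C → ℝ)}
    (h : Relation.ReflTransGen (RuleXStep cost u) (∅, fun _ _ => 0) st) :
    ValidPayments st.1 st.2 := by
  induction h with
  | refl => exact ⟨fun _ => by simp [totalPaid], fun _ _ _ => rfl⟩
  | tail _ hstep ih => exact ih.step hstep

end RuleX

section EJR

variable {V C : Type*}

def IsCohesive [Fintype V] (cost : C → ℚ) (u : V → C → ℝ) (α : C → ℝ) (S : Finset V)
    (T : Finset C) : Prop :=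
  costOf cost T * (Fintype.card V : ℝ) ≤ S.card ∧ ∀ i ∈ S, ∀ c ∈ T, α c ≤ u i c

theorem IsCohesive.costOf_div_card_le [Fintype V] {cost : C → ℚ} {u : V → C → ℝ} {α : C → ℝ}
    {S : Finset V} {T : Finset C} (hS : IsCohesive cost u α S T) (hSne : S.Nonempty) :
    costOf cost T / S.card ≤ 1 / (Fintype.card V : ℝ) := by
  obtain ⟨j, hj⟩ := hSne
  have hs : (0 : ℝ) < S.card := by exact_mod_cast Finset.card_pos.2 ⟨j, hj⟩
  have hn : (0 : ℝ) < Fintype.card V := by exact_mod_cast Fintype.card_pos_iff.2 ⟨j⟩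
  rw [div_le_div_iff₀ hs hn, one_mul]
  exact hS.1

/-- `ρ` is the least of the rates `cost c / (|S| α c)` over the candidates `c ∈ T \ W` with
`α c > 0`. -/
def IsLeastGroupRate [DecidableEq C] (cost : C → ℚ) (S : Finset V) (T W : Finset C)
    (α : C → ℝ) (ρ : ℝ) : Prop :=
  (∃ c ∈ T \ W, 0 < α c ∧ α c * ρ = cost c / S.card) ∧ ∀ c ∈ T \ W, ρ * α c ≤ cost c / S.card

/-- The bound on `p j c` that holds if `c` was bought at a rate at most `ρ` and, when `c ∈ T`,
at a rate at most `cost c / (|S| α c)`, using `α c ≤ u j c`. -/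
def PaymentBound [DecidableEq C] (cost : C → ℚ) (u : V → C → ℝ) (S : Finset V) (T : Finset C)
    (α : C → ℝ) (ρ : ℝ) (X : Finset C) (p : V → C → ℝ) : Prop :=
  ∀ j ∈ S, ∀ c ∈ X, p j c ≤ ρ * u j c - if c ∈ T then ρ * α c - cost c / S.card else 0

variable [DecidableEq C] {cost : C → ℚ} {u : V → C → ℝ} {α : C → ℝ} {S : Finset V}
  {T W X : Finset C} {ρ : ℝ} {p : V → C → ℝ}

theorem IsLeastGroupRate.nonneg (hρ : IsLeastGroupRate cost S T W α ρ)
    (hcost : ∀ c, 0 ≤ cost c) : 0 ≤ ρ := by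
  obtain ⟨c, -, hαc, hρc⟩ := hρ.1
  exact nonneg_of_mul_nonneg_right
    (hρc ▸ div_nonneg (by exact_mod_cast hcost c) S.card.cast_nonneg) hαc

theorem costOf_add_costOf_le {A B T : Finset C} {c : C} (hcost : ∀ c, 0 ≤ cost c)
    (hAB : Disjoint A B) (hsub : A ∪ B ⊆ T.erase c) (hc : c ∈ T) :
    costOf cost A + costOf cost B ≤ costOf cost T - cost c := by
  rw [costOf, costOf, ← Finset.sum_union hAB, costOf, ← Finset.sum_erase_eq_sub hc]
  exact Finset.sum_le_sum_of_subset_of_nonneg hsub fun d _ _ => by exact_mod_cast hcost d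

theorem util_sub_sum_inter_le {j : V} {Y : Finset C} (hu : ∀ c, 0 ≤ u j c)
    (hαu : ∀ c ∈ T, α c ≤ u j c) (hXY : X ⊆ Y)
    (hY : util u j Y ≤ ∑ c ∈ T, α c) :
    util u j X - ∑ c ∈ X ∩ T, α c ≤ ∑ c ∈ T \ Y, α c := by
  have hmono := Finset.sum_sub_sum_inter_le_of_subset hXY (fun c _ => hu c) hαu
  have hsplit := Finset.sum_inter_add_sum_sdiff T Y α
  rw [Finset.inter_comm] at hsplit
  unfold util at hY ⊢
  linarith

theorem exists_pos_of_util_lt {i : V} (hu : ∀ c, 0 ≤ u i c) (hαu : ∀ c ∈ T, α c ≤ u i c)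
    (h : util u i W < ∑ c ∈ T, α c) : ∃ c ∈ T \ W, 0 < α c := by
  have hW := Finset.sum_sub_sum_inter_le_of_subset (Finset.empty_subset W) (fun c _ => hu c) hαu
  simp only [Finset.sum_empty, Finset.empty_inter, sub_zero] at hW
  have hsplit := Finset.sum_inter_add_sum_sdiff T W α
  rw [Finset.inter_comm] at hsplit
  refine Finset.exists_lt_of_sum_lt (f := fun _ => 0) ?_
  unfold util at h
  simp only [Finset.sum_const_zero]
  linarith

theorem exists_isLeastGroupRate (hcost : ∀ c, 0 ≤ cost c) (h : ∃ c ∈ T \ W, 0 < α c) :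
    ∃ ρ, IsLeastGroupRate cost S T W α ρ := by
  obtain ⟨c₀, hc₀, hαc₀⟩ := h
  obtain ⟨c, hc, hmin⟩ := Finset.exists_min_image ((T \ W).filter (0 < α ·))
    (fun c => (cost c : ℝ) / α c) ⟨c₀, Finset.mem_filter.2 ⟨hc₀, hαc₀⟩⟩
  obtain ⟨hcTW, hαc⟩ := Finset.mem_filter.1 hc
  have hcost' : ∀ d, (0 : ℝ) ≤ cost d := fun d => by exact_mod_cast hcost d
  refine ⟨cost c / α c / S.card,
    ⟨c, hcTW, hαc, by rw [div_right_comm, mul_div_cancel₀ _ hαc.ne']⟩, fun d hd => ?_⟩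
  rcases le_or_gt (α d) 0 with hαd | hαd
  · have : 0 ≤ (cost c : ℝ) / α c / S.card :=
      div_nonneg (div_nonneg (hcost' c) hαc.le) S.card.cast_nonneg
    exact (mul_nonpos_of_nonneg_of_nonpos this hαd).trans
      (div_nonneg (hcost' d) S.card.cast_nonneg)
  · calc (cost c : ℝ) / α c / S.card * α d ≤ cost d / α d / S.card * α d := by
          gcongr ?_ / _ * _; exact hmin d (Finset.mem_filter.2 ⟨hd, hαd⟩)
      _ = cost d / S.card := by rw [div_right_comm, div_mul_cancel₀ _ hαd.ne']

theorem PaymentBound.buy (hb : PaymentBound cost u S T α ρ X p) {ct : C} {ρt : ℝ} {m : V → ℝ}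
    (hu : ∀ i, 0 ≤ u i ct) (hαu : ∀ i ∈ S, ct ∈ T → α ct ≤ u i ct) (hρt : ρt ≤ ρ)
    (hrate : ct ∈ T → α ct * ρt ≤ cost ct / S.card) (hm : ∀ i ∈ S, m i ≤ u i ct * ρt) :
    PaymentBound cost u S T α ρ (insert ct X) fun i c => if c = ct then m i else p i c := by
  intro j hj c hc
  by_cases hct : c = ct
  · subst hct
    simp only [if_true]
    split_ifs with hcT
    · nlinarith [hm j hj, hrate hcT, hαu j hj hcT]
    · nlinarith [hm j hj, hu j]
  · simp only [if_neg hct]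
    exact hb j hj c ((Finset.mem_insert.1 hc).resolve_left hct)

variable [Fintype V] [Fintype C]

theorem PaymentBound.totalPaid_le (hb : PaymentBound cost u S T α ρ X p)
    (hp : ValidPayments X p) {j : V} (hj : j ∈ S) :
    totalPaid p j ≤ ρ * (util u j X - ∑ c ∈ X ∩ T, α c) + costOf cost (X ∩ T) / S.card :=
  calc totalPaid p j = ∑ c ∈ X, p j c :=
        (Finset.sum_subset (Finset.subset_univ X) fun c _ hc => hp.2 j c hc).symm
    _ ≤ ∑ c ∈ X, (ρ * u j c - if c ∈ T then ρ * α c - cost c / S.card else 0) :=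
        Finset.sum_le_sum fun c hc => hb j hj c hc
    _ = _ := by
        rw [Finset.sum_sub_distrib, Finset.sum_ite_mem, Finset.sum_sub_distrib, ← Finset.mul_sum,
          ← Finset.mul_sum, ← Finset.sum_div, util, costOf]
        ring

theorem PaymentBound.budget (hb : PaymentBound cost u S T α ρ X p) (hp : ValidPayments X p)
    (hcost : ∀ c, 0 ≤ cost c) (hu : ∀ i c, 0 ≤ u i c) (hS : IsCohesive cost u α S T)
    (hfail : ∀ i ∈ S, ∀ a, util u i (insert a W) ≤ ∑ c ∈ T, α c)
    (hρ : IsLeastGroupRate cost S T W α ρ) (hXW : X ⊆ W) :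
    ∀ j ∈ S, ∀ c ∈ T \ X, cost c / S.card ≤ 1 / (Fintype.card V : ℝ) - totalPaid p j := by
  intro j hj c hc
  obtain ⟨hcT, hcX⟩ := Finset.mem_sdiff.1 hc
  obtain ⟨c₀, hc₀, -, -⟩ := hρ.1
  -- an unelected `a ∈ T` such that `c`, `T \ insert a W` and `X ∩ T` are disjoint
  set a := if c ∈ W then c₀ else c with ha_def
  have hcR : c ∉ T \ insert a W := fun h => (Finset.mem_sdiff.1 h).2 <| by
    rw [ha_def]; split_ifs with hcW
    exacts [Finset.mem_insert_of_mem hcW, Finset.mem_insert_self c W]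
  have hRT : T \ insert a W ⊆ T \ W :=
    Finset.sdiff_subset_sdiff subset_rfl (Finset.subset_insert a W)
  have hutil := util_sub_sum_inter_le (hu j) (hS.2 j hj) (hXW.trans (Finset.subset_insert a W))
    (hfail j hj a)
  have hrate : ρ * ∑ d ∈ T \ insert a W, α d ≤ costOf cost (T \ insert a W) / S.card := by
    rw [Finset.mul_sum, costOf, Finset.sum_div]
    exact Finset.sum_le_sum fun d hd => hρ.2 d (hRT hd)
  have hcostT : costOf cost (T \ insert a W) + costOf cost (X ∩ T) ≤ costOf cost T - cost c := by
    refine costOf_add_costOf_le hcost (Finset.disjoint_left.2 fun d hd hd' =>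
      (Finset.mem_sdiff.1 (hRT hd)).2 (hXW (Finset.mem_inter.1 hd').1)) (fun d hd => ?_) hcT
    rcases Finset.mem_union.1 hd with hd | hd
    · exact Finset.mem_erase.2 ⟨fun h => hcR (h ▸ hd), (Finset.mem_sdiff.1 hd).1⟩
    · obtain ⟨hdX, hdT⟩ := Finset.mem_inter.1 hd
      exact Finset.mem_erase.2 ⟨fun h => hcX (h ▸ hdX), hdT⟩
  have hs : (0 : ℝ) < S.card := by exact_mod_cast Finset.card_pos.2 ⟨j, hj⟩
  have hCs := div_le_div_of_nonneg_right hcostT hs.le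
  rw [add_div, sub_div] at hCs
  linarith [hb.totalPaid_le hp hj, mul_le_mul_of_nonneg_left hutil (hρ.nonneg hcost),
    hS.costOf_div_card_le ⟨j, hj⟩]

theorem paymentBound_of_reachable (hcost : ∀ c, 0 ≤ cost c) (hu : ∀ i c, 0 ≤ u i c)
    (hSne : S.Nonempty) (hS : IsCohesive cost u α S T)
    (hfail : ∀ i ∈ S, ∀ a, util u i (insert a W) ≤ ∑ c ∈ T, α c)
    (hρ : IsLeastGroupRate cost S T W α ρ) {st : Finset C × (V → C → ℝ)}
    (h : Relation.ReflTransGen (RuleXStep cost u) (∅, fun _ _ => 0) st) (hW : st.1 ⊆ W) :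
    PaymentBound cost u S T α ρ st.1 st.2 := by
  induction h with
  | refl => exact fun _ _ c hc => absurd hc (Finset.notMem_empty c)
  | @tail st _ hreach hstep ih =>
    obtain ⟨ct, hct, ρt, hρt0, -, hmin, rfl⟩ := hstep
    have hXW : st.1 ⊆ W := (Finset.subset_insert ct st.1).trans hW
    have hp := validPayments_of_reachable hreach
    have hb : PaymentBound cost u S T α ρ st.1 st.2 := ih hXW
    have hbudget := hb.budget hp hcost hu hS hfail hρ hXW
    have hrate : ∀ c ∈ T, c ∉ st.1 → α c * ρt ≤ cost c / S.card := fun c hcT hcX =>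
      mul_le_div_card_of_le_affordable hmin hρt0 (hcost c) (fun i => hu i c) hp.1 hcX hSne
        (fun j hj => hS.2 j hj c hcT) fun j hj => hbudget j hj c (Finset.mem_sdiff.2 ⟨hcT, hcX⟩)
    obtain ⟨c₀, hc₀, hαc₀, hρc₀⟩ := hρ.1
    obtain ⟨hc₀T, hc₀W⟩ := Finset.mem_sdiff.1 hc₀
    have hρt : ρt ≤ ρ :=
      le_of_mul_le_mul_left ((hrate c₀ hc₀T fun h => hc₀W (hXW h)).trans hρc₀.ge) hαc₀
    exact hb.buy (fun i => hu i ct) (fun i hi hcT => hS.2 i hi ct hcT) hρt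
      (fun hcT => hrate ct hcT hct) fun i _ => min_le_right _ _

end EJR

theorem ruleX_satisfies_EJR_up_to_one_general
    {V C : Type*} [Fintype V] [Fintype C] [DecidableEq C]
    (cost : C → ℚ) (u : V → C → ℝ) (hvalid : validPB cost u)
    (W : Finset C) (hW : RuleXOutcome cost u W) :
    EJRupToOne cost u W := by
  obtain ⟨hcost, hu, -⟩ := hvalid
  have hcost' : ∀ c, 0 ≤ cost c := fun c => (hcost c).le
  have hu' : ∀ i c, 0 ≤ u i c := fun i c => (hu i c).1
  obtain ⟨pay, hreach, hterm⟩ := hW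
  intro α S T _ hSne hcoh hαu
  by_contra! ⟨hlt, hfail⟩
  have hS : IsCohesive cost u α S T := ⟨hcoh, hαu⟩
  obtain ⟨i, hi⟩ := hSne
  obtain ⟨ρ, hρ⟩ := exists_isLeastGroupRate (S := S) hcost'
    (exists_pos_of_util_lt (hu' i) (hαu i hi) (hlt i hi))
  obtain ⟨c, hc, hαc, -⟩ := hρ.1
  have hp := validPayments_of_reachable hreach
  have hb := paymentBound_of_reachable hcost' hu' ⟨i, hi⟩ hS hfail hρ hreach subset_rfl
  have hbudget := hb.budget hp hcost' hu' hS hfail hρ subset_rfl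
  obtain ⟨r, hr, -, haff⟩ := exists_affordable_of_group (hcost' c) (fun j => hu' j c) hp.1
    ⟨i, hi⟩ hαc (fun j hj => hαu j hj c (Finset.mem_sdiff.1 hc).1) fun j hj => hbudget j hj c hc
  exact hterm r hr c (Finset.mem_sdiff.1 hc).2 haff

/-- Every outcome produced by an execution of Rule X satisfies
extended justified representation up to one project. -/
theorem ruleX_satisfies_EJR_up_to_one
    {V C : Type*} [Fintype V] [DecidableEq V] [Fintype C] [DecidableEq C]
    (cost : C → ℚ) (u : V → C → ℝ) (hvalid : validPB cost u)
    (W : Finset C) (hW : RuleXOutcome cost u W) :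
    EJRupToOne cost u W :=
  ruleX_satisfies_EJR_up_to_one_general cost u hvalid W hW
end

section
/- For every PB election there exists a feasible outcome W that satisfies extended justified representation up to one project: for every (α,T)-cohesive group of voters S there exists a voter i ∈ S such that u_i(W) ≥ Σ_{c∈T} α(c), or there exist i ∈ S and a candidate a ∈ C with u_i(W ∪ {a}) > Σ_{c∈T} α(c). -/
open Finset

/-!
Greedily pick, among the voters not yet served, a weakly cohesive group `S` with the largest
guaranteed utility `β`, add its projects `T` (paid for with `S`'s share `|S|/n` of the budget),
and recurse on the remaining voters. A weakly cohesive group either meets some chosen group,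
whose `β` dominates its own, or lies entirely among the remaining voters. This yields an
affordable outcome satisfying FJR, which implies EJR and hence EJR up to one project.
-/

section FJR

variable {V C : Type*} {cost : C → ℚ} {u : V → C → ℝ}

lemma costOf_union_le [DecidableEq C] (hcost : ∀ c, 0 ≤ cost c) (W T : Finset C) :
    costOf cost (W ∪ T) ≤ costOf cost W + costOf cost T := by
  have hinter : 0 ≤ costOf cost (W ∩ T) := sum_nonneg fun c _ => by exact_mod_cast hcost c
  have := sum_union_inter (s₁ := W) (s₂ := T) (f := fun c => (cost c : ℝ))
  unfold costOf at *
  linarith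

lemma util_mono (hu : ∀ i c, 0 ≤ u i c) (i : V) {T W : Finset C} (h : T ⊆ W) :
    util u i T ≤ util u i W :=
  sum_le_sum_of_subset_of_nonneg h fun c _ _ => hu i c

lemma exists_weaklyCohesive_max [Fintype V] [Fintype C] {A : Finset V} (hA : A.Nonempty) :
    ∃ β, ∃ S ⊆ A, ∃ T, weaklyCohesive cost u β S T ∧
      ∀ β' S' T', S' ⊆ A → weaklyCohesive cost u β' S' T' → β' ≤ β := by
  obtain ⟨a, ha⟩ := hA
  let P : Finset (Finset V × Finset C) := (A.powerset ×ˢ univ).filter fun p =>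
    p.1.Nonempty ∧ costOf cost p.2 * (Fintype.card V : ℝ) ≤ (p.1.card : ℝ)
  have mem_P : ∀ S T, S ⊆ A → S.Nonempty →
      costOf cost T * (Fintype.card V : ℝ) ≤ (S.card : ℝ) → (S, T) ∈ P := fun S T hSA hS hT =>
    mem_filter.2 ⟨mem_product.2 ⟨mem_powerset.2 hSA, mem_univ T⟩, hS, hT⟩
  have hP : P.Nonempty := ⟨({a}, ∅), mem_P _ _ (singleton_subset_iff.2 ha)
    (singleton_nonempty a) (by simp [costOf])⟩
  -- the largest `β` for which `p` is weakly cohesive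
  let g : Finset V × Finset C → ℝ := fun p =>
    if h : p.1.Nonempty then p.1.inf' h fun i => util u i p.2 else 0
  obtain ⟨⟨S, T⟩, hST, hmax⟩ := P.exists_max_image g hP
  obtain ⟨hST, hS, hcostT⟩ := mem_filter.1 hST
  refine ⟨g (S, T), S, mem_powerset.1 (mem_product.1 hST).1, T,
    ⟨hS, hcostT, fun i hi => ?_⟩, fun β' S' T' hS'A ⟨hS', hcostT', hβ'⟩ => ?_⟩
  · simp only [g, dif_pos hS]
    exact inf'_le _ hi
  · calc β' ≤ g (S', T') := by
          simp only [g, dif_pos hS']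
          exact le_inf' hS' _ hβ'
      _ ≤ g (S, T) := hmax _ (mem_P S' T' hS'A hS' hcostT')

lemma exists_costOf_le_forall_weaklyCohesive [Fintype V] [DecidableEq V] [Fintype C]
    [DecidableEq C] (hcost : ∀ c, 0 ≤ cost c) (hu : ∀ i c, 0 ≤ u i c) (A : Finset V) :
    ∃ W, costOf cost W ≤ A.card / Fintype.card V ∧
      ∀ β S T, S ⊆ A → weaklyCohesive cost u β S T → ∃ i ∈ S, β ≤ util u i W := by
  induction A using Finset.strongInduction with
  | H A ih =>
  rcases A.eq_empty_or_nonempty with rfl | hA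
  · exact ⟨∅, by simp [costOf], fun β S T hS ⟨hSne, _⟩ =>
      absurd (subset_empty.1 hS) hSne.ne_empty⟩
  obtain ⟨β₀, S₀, hS₀A, T₀, ⟨hS₀, hcostT₀, hβ₀⟩, hmax⟩ :=
    exists_weaklyCohesive_max (cost := cost) (u := u) hA
  obtain ⟨W, hcostW, hW⟩ := ih (A \ S₀) (sdiff_ssubset hS₀A hS₀)
  refine ⟨W ∪ T₀, ?_, fun β S T hSA hST => ?_⟩
  · have hn : (0 : ℝ) < Fintype.card V := by
      obtain ⟨a, -⟩ := hS₀
      exact_mod_cast Fintype.card_pos_iff.2 ⟨a⟩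
    have hcard : ((A \ S₀).card : ℝ) + S₀.card = A.card := by
      exact_mod_cast card_sdiff_add_card_eq_card hS₀A
    calc costOf cost (W ∪ T₀) ≤ costOf cost W + costOf cost T₀ := costOf_union_le hcost W T₀
      _ ≤ (A \ S₀).card / Fintype.card V + S₀.card / Fintype.card V :=
          add_le_add hcostW ((le_div_iff₀ hn).2 hcostT₀)
      _ = A.card / Fintype.card V := by rw [← add_div, hcard]
  by_cases hdisj : Disjoint S S₀
  · obtain ⟨i, hiS, hi⟩ := hW β S T (subset_sdiff.2 ⟨hSA, hdisj⟩) hST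
    exact ⟨i, hiS, hi.trans (util_mono hu i subset_union_left)⟩
  · obtain ⟨i, hiS, hiS₀⟩ := not_disjoint_iff.1 hdisj
    exact ⟨i, hiS, (hmax β S T hSA hST).trans <|
      (hβ₀ i hiS₀).trans (util_mono hu i subset_union_right)⟩

lemma exists_feasible_FJR [Fintype V] [DecidableEq V] [Fintype C] [DecidableEq C]
    (hcost : ∀ c, 0 ≤ cost c) (hu : ∀ i c, 0 ≤ u i c) :
    ∃ W, feasible cost W ∧ FJR cost u W := by
  obtain ⟨W, hcostW, hW⟩ := exists_costOf_le_forall_weaklyCohesive hcost hu univ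
  refine ⟨W, ?_, fun β S T => hW β S T (subset_univ S)⟩
  rw [card_univ] at hcostW
  exact hcostW.trans (div_self_le_one _)

lemma EJRexact_of_FJR [Fintype V] {W : Finset C} (h : FJR cost u W) : EJRexact cost u W :=
  fun _ S T _ hS hcostT hα =>
    h _ S T ⟨hS, hcostT, fun i hi => sum_le_sum fun c hc => hα i hi c hc⟩

lemma EJRupToOne_of_EJRexact [Fintype V] [DecidableEq C] {W : Finset C}
    (h : EJRexact cost u W) : EJRupToOne cost u W :=
  fun α S T hα hS hcostT hαu => Or.inl (h α S T hα hS hcostT hαu)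

end FJR

/-- For every PB election there exists a feasible outcome satisfying
extended justified representation up to one project. -/
theorem exists_feasible_EJR_up_to_one
    {V C : Type*} [Fintype V] [DecidableEq V] [Fintype C] [DecidableEq C]
    (cost : C → ℚ) (u : V → C → ℝ) (hvalid : validPB cost u) :
    ∃ W : Finset C, feasible cost W ∧ EJRupToOne cost u W := by
  obtain ⟨hcost, hu, -⟩ := hvalid
  obtain ⟨W, hW, hFJR⟩ := exists_feasible_FJR (fun c => (hcost c).le) fun i c => (hu i c).1
  exact ⟨W, hW, EJRupToOne_of_EJRexact (EJRexact_of_FJR hFJR)⟩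
end

section
/- Consider the two approval-based elections E1 and E2 on the voter set N = {1,2,3} and candidate set C = {L1, L2, L3, R}, with approval sets A(1) = A(2) = {L1, L2, L3} and A(3) = {R}, where in E1 the costs are cost(L1) = cost(L2) = cost(L3) = 2/9 and cost(R) = 1/2, and in E2 every candidate costs 1/3. Then: (i) a set W ⊆ C is feasible in E1 if and only if it is feasible in E2 (namely, exactly the proper subsets of C are feasible); (ii) every feasible outcome satisfying EJR in E1 contains all of L1, L2, L3; (iii) every feasible outcome satisfying EJR in E2 contains R. Consequently no single feasible set satisfies EJR in both E1 and E2, so every voting rule whose output depends only on the voters' utility functions and the family of feasible sets fails EJR on at least one of E1, E2. -/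
open Finset

/-- Onetown costs: the three L-projects (candidates 0,1,2) cost 2/9 each and
the R-project (candidate 3) costs 1/2. -/
def onetownCost : Fin 4 → ℚ := fun c => if c = 3 then 1/2 else 2/9

/-- Twotown costs: every candidate costs 1/3. -/
def twotownCost : Fin 4 → ℚ := fun _ => 1/3

/-- Approval sets: voters 0 and 1 approve {L1,L2,L3} = {0,1,2}; voter 2 approves {R} = {3}. -/
def townApprovals : Fin 3 → Finset (Fin 4) := fun i => if i = 2 then {3} else {0, 1, 2}

/-! The two elections have the same approvals and the same feasible sets, namely all proper
subsets of the four candidates. In the first, voters 1 and 2 make up two thirds of the electorate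
and the three projects they approve cost 2/3 in total, so EJR forces all of them into the outcome;
in the second, voter 3 alone is a third of the electorate and the project R costs 1/3, so EJR
forces R. Any outcome meeting both demands is the whole candidate set, which is infeasible. -/

section General

variable {V C : Type*}

theorem costOf_mono {cost : C → ℚ} (hcost : ∀ c, 0 ≤ cost c) {S T : Finset C} (hST : S ⊆ T) :
    costOf cost S ≤ costOf cost T :=
  Finset.sum_le_sum_of_subset_of_nonneg hST fun c _ _ => by exact_mod_cast hcost c

theorem feasible_iff_ne_univ [Fintype C] [DecidableEq C] {cost : C → ℚ}
    (hcost : ∀ c, 0 ≤ cost c) (huniv : ¬ feasible cost univ)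
    (herase : ∀ c, feasible cost (univ.erase c)) (W : Finset C) : feasible cost W ↔ W ≠ univ := by
  refine ⟨fun hW hWuniv => huniv (hWuniv ▸ hW), fun hW => ?_⟩
  obtain ⟨c, hc⟩ : ∃ c, c ∉ W := by simpa [Finset.eq_univ_iff_forall] using hW
  exact (costOf_mono hcost fun x hx => Finset.mem_erase.mpr ⟨ne_of_mem_of_not_mem hx hc,
    Finset.mem_univ x⟩).trans (herase c)

theorem subset_of_approvalEJR [Fintype V] [DecidableEq C] {cost : C → ℚ} {A : V → Finset C}
    {W : Finset C} (hEJR : approvalEJR cost A W) {S : Finset V} {T : Finset C} (hS : S.Nonempty)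
    (hcohesive : costOf cost T * (Fintype.card V : ℝ) ≤ (S.card : ℝ)) (hA : ∀ i ∈ S, A i = T) :
    T ⊆ W := by
  obtain ⟨i, hi, hcard⟩ := hEJR S T hS hcohesive fun i hi => (hA i hi).ge
  rw [hA i hi] at hcard
  rw [← Finset.eq_of_subset_of_card_le Finset.inter_subset_left hcard]
  exact Finset.inter_subset_right

end General

theorem feasible_onetownCost_iff (W : Finset (Fin 4)) : feasible onetownCost W ↔ W ≠ univ := by
  refine feasible_iff_ne_univ (fun c => by unfold onetownCost; split_ifs <;> norm_num) ?_ ?_ W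
  · simp [feasible, costOf, onetownCost, Fin.sum_univ_four]
    norm_num
  · intro c
    fin_cases c <;> simp [feasible, costOf, onetownCost, Finset.sum_erase_eq_sub, Fin.sum_univ_four]
      <;> norm_num

theorem feasible_twotownCost_iff (W : Finset (Fin 4)) : feasible twotownCost W ↔ W ≠ univ := by
  refine feasible_iff_ne_univ (fun c => by norm_num [twotownCost]) ?_ ?_ W
  · norm_num [feasible, costOf, twotownCost]
  · intro c
    simp [feasible, costOf, twotownCost]

theorem feasible_onetownCost_eq_feasible_twotownCost :
    feasible onetownCost = feasible twotownCost := by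
  funext W
  rw [feasible_onetownCost_iff, feasible_twotownCost_iff]

theorem subset_of_approvalEJR_onetownCost {W : Finset (Fin 4)}
    (hEJR : approvalEJR onetownCost townApprovals W) : ({0, 1, 2} : Finset (Fin 4)) ⊆ W :=
  subset_of_approvalEJR hEJR (S := {0, 1}) (by simp)
    (by simp [costOf, onetownCost]; norm_num) (by decide)

theorem mem_of_approvalEJR_twotownCost {W : Finset (Fin 4)}
    (hEJR : approvalEJR twotownCost townApprovals W) : (3 : Fin 4) ∈ W :=
  Finset.singleton_subset_iff.mp <| subset_of_approvalEJR hEJR (S := {2}) (by simp)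
    (by simp [costOf, twotownCost]) (by decide)

theorem eq_univ_of_approvalEJR_both {W : Finset (Fin 4)}
    (hEJR₁ : approvalEJR onetownCost townApprovals W)
    (hEJR₂ : approvalEJR twotownCost townApprovals W) : W = univ := by
  have hL := subset_of_approvalEJR_onetownCost hEJR₁
  have hR := mem_of_approvalEJR_twotownCost hEJR₂
  refine Finset.eq_univ_iff_forall.mpr fun c => ?_
  fin_cases c
  exacts [hL (by simp), hL (by simp), hL (by simp), hR]

/-- Onetown and Twotown have the same feasible sets (exactly the proper
subsets of C), but every feasible EJR outcome of Onetown contains all of L1,L2,L3,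
while every feasible EJR outcome of Twotown contains R; consequently no single
feasible set satisfies EJR in both elections, so every voting rule depending only
on the utility functions and the family of feasible sets fails EJR on one of them. -/
theorem welfarist_impossibility :
    (∀ W : Finset (Fin 4),
      (feasible onetownCost W ↔ feasible twotownCost W) ∧
      (feasible onetownCost W ↔ W ≠ Finset.univ)) ∧
    (∀ W : Finset (Fin 4), feasible onetownCost W → approvalEJR onetownCost townApprovals W →
      ({0, 1, 2} : Finset (Fin 4)) ⊆ W) ∧
    (∀ W : Finset (Fin 4), feasible twotownCost W → approvalEJR twotownCost townApprovals W →
      (3 : Fin 4) ∈ W) ∧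
    (¬ ∃ W : Finset (Fin 4),
      (feasible onetownCost W ∧ approvalEJR onetownCost townApprovals W) ∧
      (feasible twotownCost W ∧ approvalEJR twotownCost townApprovals W)) ∧
    (∀ R : (Fin 3 → Finset (Fin 4)) → (Finset (Fin 4) → Prop) → Finset (Fin 4),
      feasible onetownCost (R townApprovals (feasible onetownCost)) →
      feasible twotownCost (R townApprovals (feasible twotownCost)) →
      ¬ (approvalEJR onetownCost townApprovals (R townApprovals (feasible onetownCost)) ∧
         approvalEJR twotownCost townApprovals (R townApprovals (feasible twotownCost)))) := by
  have hnone : ¬ ∃ W : Finset (Fin 4),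
      (feasible onetownCost W ∧ approvalEJR onetownCost townApprovals W) ∧
      (feasible twotownCost W ∧ approvalEJR twotownCost townApprovals W) :=
    fun ⟨W, ⟨hW, hEJR₁⟩, _, hEJR₂⟩ =>
      (feasible_onetownCost_iff W).mp hW (eq_univ_of_approvalEJR_both hEJR₁ hEJR₂)
  refine ⟨fun W => ⟨Iff.of_eq (congrFun feasible_onetownCost_eq_feasible_twotownCost W),
      feasible_onetownCost_iff W⟩,
    fun W _ => subset_of_approvalEJR_onetownCost, fun W _ => mem_of_approvalEJR_twotownCost,
    hnone, ?_⟩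
  intro R _ hW ⟨hEJR₁, hEJR₂⟩
  rw [feasible_onetownCost_eq_feasible_twotownCost] at hEJR₁
  exact hnone ⟨_, ⟨feasible_onetownCost_eq_feasible_twotownCost ▸ hW, hEJR₁⟩, hW, hEJR₂⟩
end

section
/- For every integer r ≥ 2 there is an approval-based election on which PAV fails EJR: take n = r² voters and candidates a_1, …, a_r each of cost 1/r and b_1, …, b_r each of cost 1/r³, where voters 1, …, r²−1 approve {a_1, …, a_r} and voter r² approves {b_1, …, b_r}. Then the outcome W = {a_1, …, a_r} has PAV score at least that of every feasible outcome, yet W fails EJR: the group S = {voter r²} is {b_1, …, b_r}-cohesive but |A(r²) ∩ W| = 0 < r. -/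
open Finset

/-!
The `a`-candidates exhaust the budget, so a feasible outcome either takes all of them and no
`b`-candidate, or misses some `a`-candidate. Missing one costs each of the `r² - 1` majority
voters at least `1/r` of PAV score, a total of `r - 1/r ≥ H(r)`, while the lone last voter gains
at most `H(r)`; hence `W` maximizes PAV. Yet the last voter's share `1/r²` of the budget pays
for all of the `b`-candidates, of total cost `r · 1/r³`, and she approves nothing in `W`.
-/

lemma harm_succ (t : ℕ) : harm (t + 1) = harm t + 1 / ((t : ℝ) + 1) :=
  Finset.sum_range_succ _ _

lemma harm_zero : harm 0 = 0 := rfl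

lemma harm_monotone : Monotone harm := fun _ _ h =>
  Finset.sum_le_sum_of_subset_of_nonneg (Finset.range_subset_range.2 h) fun _ _ _ => by positivity

lemma harm_le_self (t : ℕ) : harm t ≤ t := by
  simpa [harm] using Finset.sum_le_card_nsmul (Finset.range t) (fun j : ℕ => (1 : ℝ) / (j + 1)) 1
    fun j _ => by rw [div_le_one (by positivity)]; simp

lemma harm_le_sub_inv {r : ℕ} (hr : 2 ≤ r) : harm r ≤ r - 1 / r := by
  obtain ⟨m, rfl⟩ := Nat.exists_eq_add_of_le' hr
  calc harm (m + 2) = harm (m + 1) + 1 / (m + 2) := by rw [harm_succ]; push_cast; ring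
    _ ≤ (m + 1) + 1 / (m + 2) := by gcongr; exact_mod_cast harm_le_self (m + 1)
    _ ≤ ((m + 2 : ℕ) : ℝ) - 1 / (m + 2 : ℕ) := by
      push_cast
      rw [← sub_nonneg]; field_simp; ring_nf; positivity

lemma mul_harm_add_harm_le {N : ℝ} {r k l : ℕ} (hN : 0 ≤ N) (hk : k < r) (hl : l ≤ r)
    (hrN : harm r ≤ N / r) : N * harm k + harm l ≤ N * harm r := by
  obtain ⟨m, rfl⟩ := Nat.exists_eq_add_of_lt hk
  have hdrop : harm k ≤ harm (k + m + 1) - 1 / (k + m + 1 : ℕ) := by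
    have := harm_monotone (Nat.le_add_right k m)
    rw [harm_succ]; push_cast; linarith
  calc N * harm k + harm l
      ≤ N * (harm (k + m + 1) - 1 / (k + m + 1 : ℕ)) + N / (k + m + 1 : ℕ) :=
        add_le_add (mul_le_mul_of_nonneg_left hdrop hN) ((harm_monotone hl).trans hrN)
    _ = N * harm (k + m + 1) := by ring

section Election

variable {V C : Type*} [Fintype V] [DecidableEq C]

lemma PAVscore_of_two_blocs (p : V → Prop) [DecidablePred p] (X Y : Finset C)
    {A : V → Finset C} (hA : ∀ i, A i = if p i then X else Y) (W : Finset C) :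
    PAVscore A W = #{i | p i} * harm #(X ∩ W) + #{i | ¬ p i} * harm #(Y ∩ W) := by
  simp only [PAVscore, hA, apply_ite (fun s : Finset C => harm #(s ∩ W)), Finset.sum_ite,
    Finset.sum_const, nsmul_eq_mul]

lemma not_approvalEJR_of_cohesive {cost : C → ℚ} {A : V → Finset C} {W : Finset C}
    {S : Finset V} {T : Finset C} (hS : S.Nonempty)
    (hcost : costOf cost T * (Fintype.card V : ℝ) ≤ #S) (hT : ∀ i ∈ S, T ⊆ A i)
    (hW : ∀ i ∈ S, #(A i ∩ W) < #T) : ¬ approvalEJR cost A W := fun hEJR => by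
  obtain ⟨i, hi, hcard⟩ := hEJR S T hS hcost hT
  exact (hW i hi).not_ge hcard

end Election

lemma costOf_of_sumElim {α β : Type*} {cost : α ⊕ β → ℚ} {p q : ℚ}
    (hcost : ∀ c, cost c = Sum.elim (fun _ => p) (fun _ => q) c) (W : Finset (α ⊕ β)) :
    costOf cost W = #W.toLeft * p + #W.toRight * q := by
  simp [costOf, hcost, Finset.sum_sum_eq_sum_toLeft_add_sum_toRight]

lemma card_filter_lt_pred {n : ℕ} : #{i : Fin n | (i : ℕ) < n - 1} = n - 1 := by
  rw [Fin.card_filter_val_lt]; omega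

lemma card_filter_pred_le {n : ℕ} (hn : 0 < n) : #{i : Fin n | n - 1 ≤ (i : ℕ)} = 1 := by
  have := Finset.card_filter_add_card_filter_not (s := univ) (fun i : Fin n => (i : ℕ) < n - 1)
  simp only [card_filter_lt_pred, card_univ, Fintype.card_fin, not_lt] at this
  omega

section SumCandidates

variable {α β : Type*} [DecidableEq α] [DecidableEq β]

lemma card_image_inl_inter [Fintype α] (W : Finset (α ⊕ β)) :
    #(univ.image Sum.inl ∩ W) = #W.toLeft := by
  rw [show univ.image Sum.inl ∩ W = W.toLeft.map .inl by ext (c | c) <;> simp, card_map]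

lemma card_image_inr_inter [Fintype β] (W : Finset (α ⊕ β)) :
    #(univ.image Sum.inr ∩ W) = #W.toRight := by
  rw [show univ.image Sum.inr ∩ W = W.toRight.map .inr by ext (c | c) <;> simp, card_map]

lemma toLeft_image_inl_univ [Fintype α] :
    (univ.image Sum.inl : Finset (α ⊕ β)).toLeft = univ := by
  ext; simp

lemma toRight_image_inl_univ [Fintype α] :
    (univ.image Sum.inl : Finset (α ⊕ β)).toRight = ∅ := by
  ext; simp

lemma toLeft_image_inr_univ [Fintype β] :
    (univ.image Sum.inr : Finset (α ⊕ β)).toLeft = ∅ := by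
  ext; simp

lemma toRight_image_inr_univ [Fintype β] :
    (univ.image Sum.inr : Finset (α ⊕ β)).toRight = univ := by
  ext; simp

lemma PAVscore_of_last_voter_right [Fintype α] [Fintype β] {n : ℕ} (hn : 0 < n)
    {A : Fin n → Finset (α ⊕ β)}
    (hA : ∀ i, A i = if (i : ℕ) < n - 1 then univ.image Sum.inl else univ.image Sum.inr)
    (W : Finset (α ⊕ β)) :
    PAVscore A W = ((n - 1 : ℕ) : ℝ) * harm #W.toLeft + harm #W.toRight := by
  rw [PAVscore_of_two_blocs _ _ _ hA, card_image_inl_inter, card_image_inr_inter]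
  simp only [not_lt, card_filter_lt_pred, card_filter_pred_le hn, Nat.cast_one, one_mul]

end SumCandidates

lemma mul_harm_add_harm_le_of_budget {r k l : ℕ} (hr : 2 ≤ r) (hk : k ≤ r) (hl : l ≤ r)
    (hbudget : (k : ℝ) * (1 / r) + l * (1 / r ^ 3) ≤ 1) :
    ((r ^ 2 - 1 : ℕ) : ℝ) * harm k + harm l ≤ ((r ^ 2 - 1 : ℕ) : ℝ) * harm r := by
  have hr0 : (0 : ℝ) < r := by positivity
  rcases hk.lt_or_eq with hk | rfl
  · refine mul_harm_add_harm_le (Nat.cast_nonneg _) hk hl ?_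
    calc harm r ≤ r - 1 / r := harm_le_sub_inv hr
      _ = ((r ^ 2 - 1 : ℕ) : ℝ) / r := by
        rw [Nat.cast_sub (Nat.one_le_pow _ _ (by omega))]; push_cast; field_simp
  · obtain rfl : l = 0 := by
      rw [mul_one_div_cancel hr0.ne'] at hbudget
      have : (l : ℝ) ≤ 0 := nonpos_of_mul_nonpos_left (by linarith) (by positivity)
      exact_mod_cast this.antisymm l.cast_nonneg
    simp [harm_zero]

/-- For every r ≥ 2, in the election with r² voters, candidates
a₁,…,a_r (the left summand, cost 1/r each) and b₁,…,b_r (the right summand,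
cost 1/r³ each), where voters 0,…,r²−2 approve all the a's and the last voter
approves all the b's, the outcome W = {a₁,…,a_r} has maximal PAV score among
feasible outcomes, yet the singleton group of the last voter is {b₁,…,b_r}-cohesive
while the last voter approves no member of W; hence W fails EJR. -/
theorem PAV_fails_EJR (r : ℕ) (hr : 2 ≤ r)
    (A : Fin (r ^ 2) → Finset (Fin r ⊕ Fin r))
    (hA : ∀ i, A i = if (i : ℕ) < r ^ 2 - 1
      then Finset.univ.image Sum.inl else Finset.univ.image Sum.inr)
    (cost : Fin r ⊕ Fin r → ℚ)
    (hcost : ∀ c, cost c = Sum.elim (fun _ => 1 / (r : ℚ)) (fun _ => 1 / (r : ℚ) ^ 3) c)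
    (W : Finset (Fin r ⊕ Fin r)) (hW : W = Finset.univ.image Sum.inl)
    (S : Finset (Fin (r ^ 2))) (hS : S = Finset.univ.filter (fun i : Fin (r ^ 2) => r ^ 2 - 1 ≤ (i : ℕ)))
    (T : Finset (Fin r ⊕ Fin r)) (hT : T = Finset.univ.image Sum.inr) :
    feasible cost W ∧
    (∀ W' : Finset (Fin r ⊕ Fin r), feasible cost W' → PAVscore A W' ≤ PAVscore A W) ∧
    (S.Nonempty ∧ costOf cost T * (Fintype.card (Fin (r ^ 2)) : ℝ) ≤ (S.card : ℝ) ∧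
      ∀ i ∈ S, T ⊆ A i) ∧
    (∀ i ∈ S, (A i ∩ W).card = 0 ∧ (A i ∩ W).card < r) ∧
    ¬ approvalEJR cost A W := by
  have hr0 : (0 : ℝ) < r := by positivity
  have hcostOf (U : Finset (Fin r ⊕ Fin r)) :
      costOf cost U = #U.toLeft * (1 / r : ℝ) + #U.toRight * (1 / r ^ 3 : ℝ) := by
    rw [costOf_of_sumElim hcost]; push_cast; rfl
  have hScard : #S = 1 := hS ▸ card_filter_pred_le (by positivity)
  have hSne : S.Nonempty := card_pos.1 (hScard ▸ one_pos)
  have hTA : ∀ i ∈ S, T ⊆ A i := fun i hi => by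
    rw [hA, if_neg (by simpa [hS] using hi), hT]
  have hmiss : ∀ i ∈ S, #(A i ∩ W) = 0 := fun i hi => by
    rw [hA, if_neg (by simpa [hS] using hi), card_image_inr_inter, hW, toRight_image_inl_univ,
      card_empty]
  have hcohesive : costOf cost T * (Fintype.card (Fin (r ^ 2)) : ℝ) ≤ #S := by
    simp only [hcostOf, hT, hScard, toLeft_image_inr_univ, toRight_image_inr_univ, card_empty,
      card_univ, Fintype.card_fin]
    exact le_of_eq (by push_cast; field_simp; ring)
  refine ⟨?_, fun U hU => ?_, ⟨hSne, hcohesive, hTA⟩,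
    fun i hi => ⟨hmiss i hi, by rw [hmiss i hi]; omega⟩,
    not_approvalEJR_of_cohesive hSne hcohesive hTA fun i hi => ?_⟩
  · simp only [feasible, hcostOf, hW, toLeft_image_inl_univ, toRight_image_inl_univ, card_empty,
      card_univ, Fintype.card_fin]
    exact le_of_eq (by push_cast; field_simp; ring)
  · rw [feasible, hcostOf] at hU
    simp only [PAVscore_of_last_voter_right (by positivity) hA, hW, toLeft_image_inl_univ,
      toRight_image_inl_univ, card_empty, card_univ, Fintype.card_fin, harm_zero, add_zero]
    exact mul_harm_add_harm_le_of_budget hr ((card_le_univ _).trans_eq (Fintype.card_fin r))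
      ((card_le_univ _).trans_eq (Fintype.card_fin r)) hU
  · rw [hmiss i hi, ← card_toLeft_add_card_toRight, hT]
    simp only [toLeft_image_inr_univ, toRight_image_inr_univ, card_empty, card_univ,
      Fintype.card_fin]
    omega
end

section
/- There is a PB election with an empty core: let N = {1,…,6}, C = {c_1,…,c_6} with cost(c_j) = 1/3 for every j, and let the utility functions satisfy u_1(c_1) > u_1(c_2) > 0, u_2(c_2) > u_2(c_3) > 0, u_3(c_3) > u_3(c_1) > 0, u_4(c_4) > u_4(c_5) > 0, u_5(c_5) > u_5(c_6) > 0, u_6(c_6) > u_6(c_4) > 0, with all other utility values equal to 0. Then for any such utilities, no feasible outcome W is in the core. -/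
open Finset

/-! A feasible outcome funds at most three of the six candidates, hence at most one candidate of
one of the two preference cycles `c₁ → c₂ → c₃ → c₁` and `c₄ → c₅ → c₆ → c₄`. Two cyclically
consecutive candidates `x, y` of that cycle are then unfunded. The two voters who value `y` (the
one who values `x, y` gets nothing from `W`, the other at most her less preferred candidate) make
up a third of the electorate, so together they can afford `y`, and both strictly prefer it to `W`.
-/

section Blocking

variable {V C : Type*} {cost : C → ℚ} {u : V → C → ℝ} {W : Finset C}

theorem card_le_of_feasible {k : ℕ} (hk : 0 < k) (hcost : ∀ c, cost c = 1 / k)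
    (hW : feasible cost W) : W.card ≤ k := by
  have hk' : (0 : ℝ) < k := by exact_mod_cast hk
  have hW' : (W.card : ℝ) / k ≤ 1 := by
    simpa [feasible, costOf, hcost, div_eq_mul_inv] using hW
  exact_mod_cast (div_le_one hk').1 hW'

theorem card_inter_add_card_inter_le {α : Type*} [DecidableEq α] (s : Finset α)
    {A B : Finset α} (hAB : Disjoint A B) : (s ∩ A).card + (s ∩ B).card ≤ s.card := by
  rw [← card_union_of_disjoint (hAB.mono inter_subset_right inter_subset_right)]
  exact card_le_card (union_subset inter_subset_left inter_subset_left)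

theorem notMem_or_notMem_of_card_inter_le_one {α : Type*} [DecidableEq α]
    {s A : Finset α} (h : (s ∩ A).card ≤ 1) {x y : α} (hxy : x ≠ y) (hx : x ∈ A) (hy : y ∈ A) :
    x ∉ s ∨ y ∉ s := by
  by_contra! hxys
  exact hxy (card_le_one.1 h x (mem_inter.2 ⟨hxys.1, hx⟩) y (mem_inter.2 ⟨hxys.2, hy⟩))

theorem util_singleton (i : V) (c : C) : util u i {c} = u i c := by
  simp [util]

theorem util_le_of_forall_mem_ne {i : V} {z : C} (h : ∀ c ∈ W, c ≠ z → u i c = 0)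
    (hz : 0 ≤ u i z) : util u i W ≤ u i z := by
  by_cases hzW : z ∈ W
  · rw [util, sum_eq_single_of_mem z hzW h]
  · rw [util, sum_eq_zero fun c hc => h c hc (ne_of_mem_of_not_mem hc hzW)]
    exact hz

theorem not_inCore_of_pair_block [Fintype V] [DecidableEq V] {a b : V} {x y z : C}
    (hcost : (cost y : ℝ) * Fintype.card V ≤ 2)
    (ha_supp : ∀ c, c ≠ x → c ≠ y → u a c = 0) (ha : 0 < u a y)
    (hb_supp : ∀ c, c ≠ y → c ≠ z → u b c = 0) (hb : 0 < u b z) (hbzy : u b z < u b y)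
    (hzx : z ≠ x) (hx : x ∉ W) (hy : y ∉ W) : ¬ inCore cost u W := by
  intro hcore
  have hzy : z ≠ y := fun h => hbzy.ne (congrArg (u b) h)
  have hab : a ≠ b := by
    rintro rfl
    exact hb.ne' (ha_supp z hzx hzy)
  obtain ⟨i, hi, hle⟩ := hcore {a, b} {y} (insert_nonempty a {b})
    (by simpa [costOf, card_pair hab] using hcost)
  rw [util_singleton] at hle
  simp only [mem_insert, mem_singleton] at hi
  rcases hi with rfl | rfl
  · have ha_zero : util u i W = 0 := sum_eq_zero fun c hc =>
      ha_supp c (ne_of_mem_of_not_mem hc hx) (ne_of_mem_of_not_mem hc hy)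
    linarith
  · have hb_le : util u i W ≤ u i z :=
      util_le_of_forall_mem_ne (fun c hc hcz => hb_supp c (ne_of_mem_of_not_mem hc hy) hcz) hb.le
    linarith

theorem not_inCore_of_cyclic_triangle [Fintype V] [DecidableEq V] [DecidableEq C]
    {i₀ i₁ i₂ : V} {x₀ x₁ x₂ : C}
    (hcost : ∀ c, (cost c : ℝ) * Fintype.card V ≤ 2)
    (h₀ : u i₀ x₁ < u i₀ x₀ ∧ 0 < u i₀ x₁) (h₁ : u i₁ x₂ < u i₁ x₁ ∧ 0 < u i₁ x₂)
    (h₂ : u i₂ x₀ < u i₂ x₂ ∧ 0 < u i₂ x₀)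
    (s₀ : ∀ c, c ≠ x₀ → c ≠ x₁ → u i₀ c = 0) (s₁ : ∀ c, c ≠ x₁ → c ≠ x₂ → u i₁ c = 0)
    (s₂ : ∀ c, c ≠ x₂ → c ≠ x₀ → u i₂ c = 0)
    (hW : (W ∩ {x₀, x₁, x₂}).card ≤ 1) : ¬ inCore cost u W := by
  have h01 : x₀ ≠ x₁ := fun h => h₀.1.ne' (congrArg (u i₀) h)
  have h12 : x₁ ≠ x₂ := fun h => h₁.1.ne' (congrArg (u i₁) h)
  have h20 : x₂ ≠ x₀ := fun h => h₂.1.ne' (congrArg (u i₂) h)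
  have p01 := notMem_or_notMem_of_card_inter_le_one hW h01 (by simp) (by simp)
  have p12 := notMem_or_notMem_of_card_inter_le_one hW h12 (by simp) (by simp)
  have p20 := notMem_or_notMem_of_card_inter_le_one hW h20 (by simp) (by simp)
  have : (x₀ ∉ W ∧ x₁ ∉ W) ∨ (x₁ ∉ W ∧ x₂ ∉ W) ∨ (x₂ ∉ W ∧ x₀ ∉ W) := by tauto
  rcases this with ⟨hx, hy⟩ | ⟨hx, hy⟩ | ⟨hx, hy⟩
  · exact not_inCore_of_pair_block (hcost _) s₀ h₀.2 s₁ h₁.2 h₁.1 h20 hx hy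
  · exact not_inCore_of_pair_block (hcost _) s₁ h₁.2 s₂ h₂.2 h₂.1 h01 hx hy
  · exact not_inCore_of_pair_block (hcost _) s₂ h₂.2 s₀ h₀.2 h₀.1 h12 hx hy

end Blocking

theorem core_can_be_empty_general
    (u : Fin 6 → Fin 6 → ℝ)
    (h1 : u 0 0 > u 0 1 ∧ u 0 1 > 0)
    (h2 : u 1 1 > u 1 2 ∧ u 1 2 > 0)
    (h3 : u 2 2 > u 2 0 ∧ u 2 0 > 0)
    (h4 : u 3 3 > u 3 4 ∧ u 3 4 > 0)
    (h5 : u 4 4 > u 4 5 ∧ u 4 5 > 0)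
    (h6 : u 5 5 > u 5 3 ∧ u 5 3 > 0)
    (hzero : ∀ i c : Fin 6, ((i : ℕ), (c : ℕ)) ∉
      ({(0,0), (0,1), (1,1), (1,2), (2,2), (2,0),
        (3,3), (3,4), (4,4), (4,5), (5,5), (5,3)} : Set (ℕ × ℕ)) → u i c = 0)
    (cost : Fin 6 → ℚ) (hcost : ∀ c, cost c = 1/3) :
    ¬ ∃ W : Finset (Fin 6), feasible cost W ∧ inCore cost u W := by
  rintro ⟨W, hfeas, hcore⟩
  have hcard : W.card ≤ 3 :=
    card_le_of_feasible (by norm_num) (fun c => by rw [hcost]; norm_num) hfeas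
  have hsplit := card_inter_add_card_inter_le W
    (show Disjoint ({0, 1, 2} : Finset (Fin 6)) {3, 4, 5} by decide)
  have hshare : ∀ c, (cost c : ℝ) * Fintype.card (Fin 6) ≤ 2 := fun c => by
    rw [hcost]; norm_num
  have s₀ : ∀ c, c ≠ 0 → c ≠ 1 → u 0 c = 0 := fun c h h' =>
    hzero 0 c (by fin_cases c <;> simp at h h' ⊢)
  have s₁ : ∀ c, c ≠ 1 → c ≠ 2 → u 1 c = 0 := fun c h h' =>
    hzero 1 c (by fin_cases c <;> simp at h h' ⊢)
  have s₂ : ∀ c, c ≠ 2 → c ≠ 0 → u 2 c = 0 := fun c h h' =>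
    hzero 2 c (by fin_cases c <;> simp at h h' ⊢)
  have s₃ : ∀ c, c ≠ 3 → c ≠ 4 → u 3 c = 0 := fun c h h' =>
    hzero 3 c (by fin_cases c <;> simp at h h' ⊢)
  have s₄ : ∀ c, c ≠ 4 → c ≠ 5 → u 4 c = 0 := fun c h h' =>
    hzero 4 c (by fin_cases c <;> simp at h h' ⊢)
  have s₅ : ∀ c, c ≠ 5 → c ≠ 3 → u 5 c = 0 := fun c h h' =>
    hzero 5 c (by fin_cases c <;> simp at h h' ⊢)
  by_cases hA : (W ∩ {0, 1, 2}).card ≤ 1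
  · exact not_inCore_of_cyclic_triangle hshare h1 h2 h3 s₀ s₁ s₂ hA hcore
  · exact not_inCore_of_cyclic_triangle hshare h4 h5 h6 s₃ s₄ s₅ (by omega) hcore

/-- A PB election with an empty core: 6 voters, 6 candidates of
cost 1/3 each, with the cyclic utility structure described in the paper.
No feasible outcome is in the core. -/
theorem core_can_be_empty
    (u : Fin 6 → Fin 6 → ℝ)
    (hrange : ∀ i c, 0 ≤ u i c ∧ u i c ≤ 1)
    (h1 : u 0 0 > u 0 1 ∧ u 0 1 > 0)
    (h2 : u 1 1 > u 1 2 ∧ u 1 2 > 0)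
    (h3 : u 2 2 > u 2 0 ∧ u 2 0 > 0)
    (h4 : u 3 3 > u 3 4 ∧ u 3 4 > 0)
    (h5 : u 4 4 > u 4 5 ∧ u 4 5 > 0)
    (h6 : u 5 5 > u 5 3 ∧ u 5 3 > 0)
    (hzero : ∀ i c : Fin 6, ((i : ℕ), (c : ℕ)) ∉
      ({(0,0), (0,1), (1,1), (1,2), (2,2), (2,0),
        (3,3), (3,4), (4,4), (4,5), (5,5), (5,3)} : Set (ℕ × ℕ)) → u i c = 0)
    (cost : Fin 6 → ℚ) (hcost : ∀ c, cost c = 1/3) :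
    ¬ ∃ W : Finset (Fin 6), feasible cost W ∧ inCore cost u W :=
  core_can_be_empty_general u h1 h2 h3 h4 h5 h6 hzero cost hcost
end

section
/- Every outcome W produced by an execution of Rule X is priceable; in fact W, together with the payments made during the execution, is supported by a price system with initial budget b = 1. -/
open Finset

/-!
The payments recorded by Rule X form a price system with budget `1`: an induction over the
execution shows that every voter stays within `1/n`, pays only for candidates she likes and
only for selected ones, and that each selected candidate is paid for exactly. The remaining
condition (C5) is where termination enters. The map `ρ ↦ ∑ᵢ min (rᵢ, uᵢ(c)·ρ)`, with `rᵢ` the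
leftover budgets, is continuous, vanishes at `0` and eventually equals the leftover of the
supporters of `c`. If that leftover exceeded `cost c`, the intermediate value theorem would
make `c` affordable, contradicting termination.
-/

open Finset

theorem Finset.exists_sum_min_mul_eq {ι : Type*} (s : Finset ι) {r w : ι → ℝ}
    (hr : ∀ i ∈ s, 0 ≤ r i) (hw : ∀ i ∈ s, 0 ≤ w i) {x : ℝ} (hx₀ : 0 ≤ x)
    (hx : x ≤ ∑ i ∈ s with 0 < w i, r i) :
    ∃ ρ, 0 ≤ ρ ∧ ∑ i ∈ s, min (r i) (w i * ρ) = x := by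
  set f : ℝ → ℝ := fun ρ => ∑ i ∈ s, min (r i) (w i * ρ)
  -- at `ρ = R` every supporter's term is saturated at `r i`
  set R := ∑ i ∈ s with 0 < w i, r i / w i
  have hR : 0 ≤ R := sum_nonneg fun i hi => by
    have := mem_filter.1 hi
    exact div_nonneg (hr i this.1) this.2.le
  have hf₀ : f 0 = 0 := sum_eq_zero fun i hi => by simp [hr i hi]
  have hfR : f R = ∑ i ∈ s with 0 < w i, r i := by
    rw [sum_filter]
    refine sum_congr rfl fun i hi => ?_
    split_ifs with hwi
    · refine min_eq_left ?_
      have hle : r i / w i ≤ R :=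
        single_le_sum (fun j hj => div_nonneg (hr j (mem_filter.1 hj).1) (mem_filter.1 hj).2.le)
          (mem_filter.2 ⟨hi, hwi⟩)
      calc r i = w i * (r i / w i) := by field_simp
        _ ≤ w i * R := by gcongr
    · simp [le_antisymm (not_lt.1 hwi) (hw i hi), hr i hi]
  have hf : Continuous f := continuous_finsetSum _ fun i _ => by fun_prop
  obtain ⟨ρ, hρ, hfρ⟩ :=
    intermediate_value_Icc hR hf.continuousOn (show x ∈ Set.Icc (f 0) (f R) by
      rw [hf₀, hfR]; exact ⟨hx₀, hx⟩)
  exact ⟨ρ, hρ.1, hfρ⟩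

theorem Fintype.sum_ite_eq_add {ι M : Type*} [Fintype ι] [DecidableEq ι] [AddCommMonoid M]
    {f : ι → M} {j : ι} (hj : f j = 0) (a : M) :
    ∑ i, (if i = j then a else f i) = a + ∑ i, f i := by
  have : ∀ i, (if i = j then a else f i) = f i + if i = j then a else 0 := by
    intro i
    split_ifs with h
    · simp [h, hj]
    · simp
  simp only [this, sum_add_distrib, sum_ite_eq', add_comm]

section RuleX

variable {V C : Type*} [Fintype V] [Fintype C] {cost : C → ℚ} {u : V → C → ℝ}

structure RuleXInvariant (cost : C → ℚ) (u : V → C → ℝ) (W : Finset C) (pay : V → C → ℝ) :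
    Prop where
  nonneg : ∀ i c, 0 ≤ pay i c
  eq_zero_of_util_eq_zero : ∀ i c, u i c = 0 → pay i c = 0
  totalPaid_le : ∀ i, totalPaid pay i ≤ 1 / Fintype.card V
  eq_zero_of_notMem : ∀ c ∉ W, ∀ i, pay i c = 0
  sum_eq_cost : ∀ c ∈ W, ∑ i, pay i c = cost c

namespace RuleXInvariant

theorem init : RuleXInvariant cost u (∅ : Finset C) (fun (_ : V) (_ : C) => (0 : ℝ)) where
  nonneg _ _ := le_rfl
  eq_zero_of_util_eq_zero _ _ _ := rfl
  totalPaid_le _ := by simp [totalPaid]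
  eq_zero_of_notMem _ _ _ := rfl
  sum_eq_cost _ hc := absurd hc (notMem_empty _)

theorem step [DecidableEq C] (hu : ∀ i c, 0 ≤ u i c) {s t : Finset C × (V → C → ℝ)}
    (hs : RuleXInvariant cost u s.1 s.2) (h : RuleXStep cost u s t) :
    RuleXInvariant cost u t.1 t.2 := by
  obtain ⟨c, hc, ρ, hρ, haff, -, rfl⟩ := h
  set m : V → ℝ := fun i => min (1 / Fintype.card V - totalPaid s.2 i) (u i c * ρ)
  have hm : ∀ i, 0 ≤ m i := fun i =>
    le_min (sub_nonneg.2 (hs.totalPaid_le i)) (mul_nonneg (hu i c) hρ)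
  refine ⟨fun i c' => ?_, fun i c' hu₀ => ?_, fun i => ?_, fun c' hc' i => ?_, fun c' hc' => ?_⟩
  · dsimp only
    split_ifs
    exacts [hm i, hs.nonneg i c']
  · dsimp only
    split_ifs with h
    · subst h
      simpa [hu₀] using hs.totalPaid_le i
    · exact hs.eq_zero_of_util_eq_zero i c' hu₀
  · have hmi : m i ≤ 1 / Fintype.card V - totalPaid s.2 i := min_le_left _ _
    calc totalPaid (fun i c' => if c' = c then m i else s.2 i c') i
        _ = m i + totalPaid s.2 i := Fintype.sum_ite_eq_add (hs.eq_zero_of_notMem c hc i) (m i)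
        _ ≤ 1 / Fintype.card V := by linarith
  · obtain ⟨hne, hc'⟩ := not_or.1 (mt mem_insert.2 hc')
    simp [hne, hs.eq_zero_of_notMem c' hc' i]
  · rcases mem_insert.1 hc' with rfl | hmem
    · simpa [affordable] using haff
    · have hne : c' ≠ c := ne_of_mem_of_not_mem hmem hc
      simpa [hne] using hs.sum_eq_cost c' hmem

theorem of_reflTransGen [DecidableEq C] (hu : ∀ i c, 0 ≤ u i c) {s t : Finset C × (V → C → ℝ)}
    (h : Relation.ReflTransGen (RuleXStep cost u) s t) (hs : RuleXInvariant cost u s.1 s.2) :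
    RuleXInvariant cost u t.1 t.2 := by
  induction h with
  | refl => exact hs
  | tail _ hstep ih => exact ih.step hu hstep

variable {W : Finset C} {pay : V → C → ℝ}

theorem sum_mem_eq_totalPaid (hinv : RuleXInvariant cost u W pay) (i : V) :
    ∑ c ∈ W, pay i c = totalPaid pay i :=
  sum_subset (subset_univ W) fun c _ hc => hinv.eq_zero_of_notMem c hc i

theorem leftover_le_cost (hinv : RuleXInvariant cost u W pay) (hu : ∀ i c, 0 ≤ u i c)
    (hterm : RuleXTerminal cost u (W, pay)) {c : C} (hcost : 0 ≤ cost c) (hc : c ∉ W) :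
    ∑ i ∈ univ with 0 < u i c, (1 / Fintype.card V - ∑ c' ∈ W, pay i c') ≤ cost c := by
  by_contra! hlt
  simp only [hinv.sum_mem_eq_totalPaid] at hlt
  obtain ⟨ρ, hρ, haff⟩ := univ.exists_sum_min_mul_eq
    (fun i _ => sub_nonneg.2 (hinv.totalPaid_le i)) (fun i _ => hu i c)
    (by exact_mod_cast hcost) hlt.le
  exact hterm ρ hρ c hc haff

end RuleXInvariant

end RuleX

theorem ruleX_priceable_general
    {V C : Type*} [Fintype V] [Fintype C] [DecidableEq C]
    (cost : C → ℚ) (u : V → C → ℝ) (hvalid : validPB cost u)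
    (W : Finset C) (pay : V → C → ℝ)
    (hreach : Relation.ReflTransGen (RuleXStep cost u) (∅, fun _ _ => 0) (W, pay))
    (hterm : RuleXTerminal cost u (W, pay)) :
    supports cost u 1 pay W ∧ priceable cost u W := by
  obtain ⟨hcost, hbounds, -⟩ := hvalid
  have hu : ∀ i c, 0 ≤ u i c := fun i c => (hbounds i c).1
  have hinv : RuleXInvariant cost u W pay :=
    RuleXInvariant.of_reflTransGen hu hreach RuleXInvariant.init
  have hsupp : supports cost u 1 pay W :=
    ⟨le_rfl, hinv.nonneg, hinv.eq_zero_of_util_eq_zero, hinv.totalPaid_le, hinv.sum_eq_cost,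
      fun c hc => sum_eq_zero fun i _ => hinv.eq_zero_of_notMem c hc i,
      fun c hc => hinv.leftover_le_cost hu hterm (hcost c).le hc⟩
  exact ⟨hsupp, 1, pay, hsupp⟩

/-- Every Rule X outcome is priceable; in fact, together with the
payments made during the execution, it is supported by a price system with
initial budget b = 1. -/
theorem ruleX_priceable
    {V C : Type*} [Fintype V] [DecidableEq V] [Fintype C] [DecidableEq C]
    (cost : C → ℚ) (u : V → C → ℝ) (hvalid : validPB cost u)
    (W : Finset C) (pay : V → C → ℝ)
    (hreach : Relation.ReflTransGen (RuleXStep cost u) (∅, fun _ _ => 0) (W, pay))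
    (hterm : RuleXTerminal cost u (W, pay)) :
    supports cost u 1 pay W ∧ priceable cost u W :=
  ruleX_priceable_general cost u hvalid W pay hreach hterm
end
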